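/- arXiv:2402.17477 — 5 statements merged into one kernel-verified Lean document; each statement's English description precedes it below -/
import Mathlib

section
/- For every 1 ≤ k ≤ n, the class D_{σ_T,k} is closed under k-images; that is, if M admits an exact sequence C_k → ... → C_1 → M → 0 with all C_i in D_{σ_T,k}, then M is in D_{σ_T,k}. -/
open CategoryTheory

/-- `X` belongs to `add T`: a direct summand of a finite direct sum of copies of `T`. -/
def InAdd (A : Type) [Ring A] (T X : Type) [AddCommGroup T] [Module A T]
    [AddCommGroup X] [Module A X] : Prop :=
  ∃ (m : ℕ) (ι : X →ₗ[A] (Fin m → T)) (π : (Fin m → T) →ₗ[A] X), π ∘ₗ ι = LinearMap.id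

/-- An `(n+1)`-projective presentation `P_n → ⋯ → P_0 → T → 0` of `T`
(with `P i` trivial for `i > n`). -/
structure ProjPres (A : Type) [Ring A] (n : ℕ) (T : Type) [AddCommGroup T] [Module A T] where
  P : ℕ → ModuleCat.{0} A
  f : ∀ i, P (i + 1) →ₗ[A] P i
  ε : P 0 →ₗ[A] T
  projective : ∀ i, Module.Projective A (P i)
  triv : ∀ i, n < i → Subsingleton (P i)
  surj : Function.Surjective ε
  exact0 : Function.Exact (f 0) ε
  exact : ∀ i < n, Function.Exact (f (i + 1)) (f i)

variable {A : Type} [Ring A] {n : ℕ} {T : Type} [AddCommGroup T] [Module A T]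

/-- Membership in the class `𝒟_{σ_T,k}`: exactness of
`Hom(P_{n-k},M) → ⋯ → Hom(P_n,M) → 0`. -/
def ProjPres.MemDk (σ : ProjPres A n T) (k : ℕ) (M : ModuleCat.{0} A) : Prop :=
  ∀ i, n - k ≤ i → i < n → ∀ g : σ.P (i + 1) →ₗ[A] M, g ∘ₗ σ.f (i + 1) = 0 →
    ∃ h : σ.P i →ₗ[A] M, g = h ∘ₗ σ.f i

/-- Membership in the class `𝒟_{σ_T}`. -/
def ProjPres.MemD (σ : ProjPres A n T) (M : ModuleCat.{0} A) : Prop :=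
  σ.MemDk n M

/-- An exact sequence `A → T_0 → ⋯ → T_n → 0` with all `T_i ∈ add T`
(with `Q i` trivial for `i > n`). -/
structure AddPres (A : Type) [Ring A] (n : ℕ) (T : Type) [AddCommGroup T] [Module A T] where
  Q : ℕ → ModuleCat.{0} A
  g0 : A →ₗ[A] Q 0
  g : ∀ i, Q i →ₗ[A] Q (i + 1)
  inAdd : ∀ i ≤ n, InAdd A T (Q i)
  triv : ∀ i, n < i → Subsingleton (Q i)
  exact0 : Function.Exact g0 (g 0)
  exact : ∀ i < n, Function.Exact (g i) (g (i + 1))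

/-- Membership in the class `𝒟_{σ_A,k}`: exactness of
`Hom(T_{k-1},M) → ⋯ → Hom(T_0,M) → Hom(A,M) → 0`. -/
def AddPres.MemDAk (σ : AddPres A n T) (k : ℕ) (M : ModuleCat.{0} A) : Prop :=
  (∀ u : A →ₗ[A] M, ∃ h : σ.Q 0 →ₗ[A] M, u = h ∘ₗ σ.g0) ∧
  (2 ≤ k → ∀ h : σ.Q 0 →ₗ[A] M, h ∘ₗ σ.g0 = 0 →
    ∃ h' : σ.Q 1 →ₗ[A] M, h = h' ∘ₗ σ.g 0) ∧
  (∀ i, i + 3 ≤ k → ∀ h : σ.Q (i + 1) →ₗ[A] M, h ∘ₗ σ.g i = 0 →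
    ∃ h' : σ.Q (i + 2) →ₗ[A] M, h = h' ∘ₗ σ.g (i + 1))

/-- Membership in the class `𝒟_{σ_A}`. -/
def AddPres.MemDA (σ : AddPres A n T) (M : ModuleCat.{0} A) : Prop :=
  σ.MemDAk (n + 1) M

/-- `M ∈ Pres^k(T)`: there is an exact sequence `C_k → ⋯ → C_1 → M → 0` with `C_i ∈ add T`. -/
def MemPres (A : Type) [Ring A] (T : Type) [AddCommGroup T] [Module A T]
    (k : ℕ) (M : ModuleCat.{0} A) : Prop :=
  ∃ (C : ℕ → ModuleCat.{0} A) (f : ∀ i, C (i + 1) →ₗ[A] C i) (ε : C 0 →ₗ[A] M),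
    (∀ i < k, InAdd A T (C i)) ∧ Function.Surjective ε ∧
    (2 ≤ k → Function.Exact (f 0) ε) ∧
    (∀ i, i + 3 ≤ k → Function.Exact (f (i + 1)) (f i))

/-- `M ∈ Gen(T)`. -/
def MemGen (A : Type) [Ring A] (T : Type) [AddCommGroup T] [Module A T]
    (M : ModuleCat.{0} A) : Prop :=
  MemPres A T 1 M

/-- `M ∈ Appres^k(T)` : `M` admits an approximate `k`-`add T`-presentation. -/
def MemAppres (A : Type) [Ring A] (T : Type) [AddCommGroup T] [Module A T]
    (k : ℕ) (M : ModuleCat.{0} A) : Prop :=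
  ∃ (C : ℕ → ModuleCat.{0} A) (f : ∀ i, C (i + 1) →ₗ[A] C i) (ε : C 0 →ₗ[A] M),
    (∀ i < k, InAdd A T (C i)) ∧ Function.Surjective ε ∧
    (2 ≤ k → Function.Exact (f 0) ε) ∧
    (∀ i, i + 3 ≤ k → Function.Exact (f (i + 1)) (f i)) ∧
    (∀ (X : ModuleCat.{0} A), InAdd A T X →
      (∀ u : X →ₗ[A] M, ∃ v : X →ₗ[A] C 0, u = ε ∘ₗ v) ∧
      (2 ≤ k → ∀ v : X →ₗ[A] C 0, ε ∘ₗ v = 0 → ∃ w : X →ₗ[A] C 1, v = f 0 ∘ₗ w) ∧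
      (∀ i, i + 3 ≤ k → ∀ w : X →ₗ[A] C (i + 1), f i ∘ₗ w = 0 →
        ∃ w' : X →ₗ[A] C (i + 2), w = f (i + 1) ∘ₗ w'))

/-- `T` has projective dimension at most `n`. -/
def PdLE (A : Type) [Ring A] (n : ℕ) (T : Type) [AddCommGroup T] [Module A T] : Prop :=
  ∃ σ : ProjPres A n T, (n = 0 → Function.Injective σ.ε) ∧
    ∀ m, m + 1 = n → Function.Injective (σ.f m)

section Ext

variable [HasExt.{0} (ModuleCat.{0} A)]

/-- `Ext^i_A(T,M) = 0`. -/
def ExtVanish (A : Type) [Ring A] (T : Type) [AddCommGroup T] [Module A T]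
    [HasExt.{0} (ModuleCat.{0} A)] (M : ModuleCat.{0} A) (i : ℕ) : Prop :=
  Subsingleton (Abelian.Ext (ModuleCat.of A T) M i)

end Ext

/-- `T` is an `n`-tilting module. -/
def IsNTilting (A : Type) [Ring A] (n : ℕ) (T : Type) [AddCommGroup T] [Module A T]
    [HasExt.{0} (ModuleCat.{0} A)] : Prop :=
  PdLE A n T ∧ (∀ i, 0 < i → ExtVanish A T (ModuleCat.of A T) i) ∧
    ∃ σ : AddPres A n T, Function.Injective σ.g0

/-- `T` is an `n`-AIR-tilting module with respect to `(σ_T, σ_A)`. -/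
def IsNAIRTiltingWrt (σT : ProjPres A n T) (σA : AddPres A n T) : Prop :=
  (∀ i, Module.Finite A (σT.P i)) ∧ σT.MemD (ModuleCat.of A T) ∧ σA.MemDA (ModuleCat.of A T)

/-- `T` is an `n`-AIR-tilting module. -/
def IsNAIRTilting (A : Type) [Ring A] (n : ℕ) (T : Type) [AddCommGroup T] [Module A T] : Prop :=
  ∃ (σT : ProjPres A n T) (σA : AddPres A n T), IsNAIRTiltingWrt σT σA

/-- `T` is a strongly `n`-AIR-tilting module. -/
def IsStronglyNAIRTilting (A : Type) [Ring A] (n : ℕ) (T : Type)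
    [AddCommGroup T] [Module A T] : Prop :=
  ∃ (σT : ProjPres A n T) (σA : AddPres A n T), IsNAIRTiltingWrt σT σA ∧
    ∀ M : ModuleCat.{0} A, σT.MemD M ↔ σA.MemDA M

/-- `T` is an `n`-silting module with respect to `σ_T`. -/
def IsNSiltingWrt (σT : ProjPres A n T) : Prop :=
  (∀ i, Module.Finite A (σT.P i)) ∧ ∀ M : ModuleCat.{0} A, σT.MemD M ↔ MemPres A T n M

/-- `T` is an `n`-silting module. -/
def IsNSilting (A : Type) [Ring A] (n : ℕ) (T : Type) [AddCommGroup T] [Module A T] : Prop :=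
  ∃ σT : ProjPres A n T, IsNSiltingWrt σT

/-- `ann`-faithful dimension of `T` is at least `n`: there is an exact sequence
`A → T_1 → ⋯ → T_n` with `T_i ∈ add T` whose `Hom(-,T)`-dual, augmented by `→ 0`, is exact. -/
def AnnFaithDimGE (A : Type) [Ring A] (n : ℕ) (T : Type) [AddCommGroup T] [Module A T] : Prop :=
  ∃ (Q : ℕ → ModuleCat.{0} A) (g0 : A →ₗ[A] Q 0) (g : ∀ i, Q i →ₗ[A] Q (i + 1)),
    (∀ i < n, InAdd A T (Q i)) ∧
    (2 ≤ n → Function.Exact g0 (g 0)) ∧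
    (∀ i, i + 3 ≤ n → Function.Exact (g i) (g (i + 1))) ∧
    (∀ u : A →ₗ[A] T, ∃ h : Q 0 →ₗ[A] T, u = h ∘ₗ g0) ∧
    (2 ≤ n → ∀ h : Q 0 →ₗ[A] T, h ∘ₗ g0 = 0 → ∃ h' : Q 1 →ₗ[A] T, h = h' ∘ₗ g 0) ∧
    (∀ i, i + 3 ≤ n → ∀ h : Q (i + 1) →ₗ[A] T, h ∘ₗ g i = 0 →
      ∃ h' : Q (i + 2) →ₗ[A] T, h = h' ∘ₗ g (i + 1))

/-- `T` is strongly `n`-quasi-tilting. -/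
def IsStronglyNQuasiTilting (A : Type) [Ring A] (n : ℕ) (T : Type)
    [AddCommGroup T] [Module A T] [HasExt.{0} (ModuleCat.{0} A)] : Prop :=
  (∀ M : ModuleCat.{0} A, MemPres A T n M ↔ MemPres A T (n + 1) M) ∧
  ∀ k, 1 ≤ k → k ≤ n → ∀ M : ModuleCat.{0} A, MemPres A T k M →
    ∀ i, n - k + 1 ≤ i → i ≤ n → ExtVanish A T M i

/-- `T` is `n`-quasi-tilting. -/
def IsNQuasiTilting (A : Type) [Ring A] (n : ℕ) (T : Type)
    [AddCommGroup T] [Module A T] [HasExt.{0} (ModuleCat.{0} A)] : Prop :=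
  (∀ M : ModuleCat.{0} A, MemPres A T n M ↔ MemPres A T (n + 1) M) ∧
  ∀ M : ModuleCat.{0} A, MemPres A T n M → ∀ i, 1 ≤ i → i ≤ n → ExtVanish A T M i

/-- Projective lifting through an exact pair. -/
lemma lift_of_exact' {R : Type} [Ring R] {P M N K : Type} [AddCommGroup P] [Module R P]
    [AddCommGroup M] [Module R M] [AddCommGroup N] [Module R N]
    [AddCommGroup K] [Module R K] [Module.Projective R P]
    (u : M →ₗ[R] N) (v : N →ₗ[R] K) (hexact : Function.Exact u v)
    (r : P →ₗ[R] N) (hr : v ∘ₗ r = 0) : ∃ s : P →ₗ[R] M, u ∘ₗ s = r := by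
  have hmem : ∀ x, r x ∈ LinearMap.range u := by
    intro x
    have h0 : v (r x) = 0 := by
      have := LinearMap.ext_iff.mp hr x
      simpa using this
    rcases (hexact (r x)).mp h0 with ⟨y, hy⟩
    exact ⟨y, hy⟩
  obtain ⟨s, hs⟩ := Module.projective_lifting_property (LinearMap.rangeRestrict u)
    (LinearMap.codRestrict (LinearMap.range u) r hmem) (LinearMap.surjective_rangeRestrict u)
  refine ⟨s, ?_⟩
  ext x
  have := LinearMap.ext_iff.mp hs x
  simpa using congrArg Subtype.val this

/-- For `1 ≤ k ≤ n`, the class `𝒟_{σ_T,k}` is closed under `k`-images. -/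
theorem stmt_1 (A : Type) [Ring A] (n : ℕ) (T : Type) [AddCommGroup T] [Module A T]
    (σ : ProjPres A n T) (k : ℕ) (hk1 : 1 ≤ k) (hkn : k ≤ n)
    (M : ModuleCat.{0} A)
    (C : ℕ → ModuleCat.{0} A) (f : ∀ i, C (i + 1) →ₗ[A] C i) (ε : C 0 →ₗ[A] M)
    (hC : ∀ i < k, σ.MemDk k (C i))
    (hsurj : Function.Surjective ε)
    (hex0 : 2 ≤ k → Function.Exact (f 0) ε)
    (hex : ∀ i, i + 3 ≤ k → Function.Exact (f (i + 1)) (f i)) :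
    σ.MemDk k M := by
  intro i hi1 hi2 g hg
  -- maps out of trivial modules are zero
  have hmapzero : ∀ (m : ℕ), n < m → ∀ (N : ModuleCat.{0} A) (φ : σ.P m →ₗ[A] N), φ = 0 := by
    intro m hm N φ
    have := σ.triv m hm
    exact LinearMap.ext fun x => by rw [Subsingleton.elim x 0, map_zero, LinearMap.zero_apply]
  have hff : ∀ m, σ.f m ∘ₗ σ.f (m + 1) = 0 := by
    intro m
    by_cases hm : m < n
    · exact LinearMap.ext fun x => (σ.exact m hm).apply_apply_eq_zero x
    · exact hmapzero (m + 2) (by omega) (σ.P m) (σ.f m ∘ₗ σ.f (m + 1))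
  have key : ∀ t j, j + 1 + t = k →
      ∀ gj : σ.P (i + j + 1) →ₗ[A] C j,
      (1 ≤ t → ∃ r : σ.P (i + j + 2) →ₗ[A] C (j + 1),
        gj ∘ₗ σ.f (i + j + 1) = f j ∘ₗ r) →
      ∃ (h : σ.P (i + j) →ₗ[A] C j) (u : σ.P (i + j + 1) →ₗ[A] C (j + 1)),
        gj = h ∘ₗ σ.f (i + j) + f j ∘ₗ u ∧ (j + 1 = k → u = 0) := by
    intro t
    induction t with
    | zero =>
      intro j hjk gj _
      by_cases hn : i + j < n
      · have hsub : n < i + j + 2 := by omega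
        have hf0 : σ.f (i + j + 1) = 0 := hmapzero _ hsub _ (σ.f (i + j + 1))
        obtain ⟨h, hh⟩ := hC j (by omega) (i + j) (by omega) hn gj
          (by rw [hf0, LinearMap.comp_zero])
        exact ⟨h, 0, by rw [LinearMap.comp_zero, add_zero]; exact hh, fun _ => rfl⟩
      · have hsub : n < i + j + 1 := by omega
        have hgj0 : gj = 0 := hmapzero _ hsub _ gj
        exact ⟨0, 0, by simp [hgj0], fun _ => rfl⟩
    | succ t IH =>
      intro j hjk gj hinv
      obtain ⟨r, hr⟩ := hinv (by omega)
      by_cases hn : i + j < n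
      · have hrec : 1 ≤ t → ∃ r' : σ.P (i + (j + 1) + 2) →ₗ[A] C (j + 1 + 1),
            r ∘ₗ σ.f (i + (j + 1) + 1) = f (j + 1) ∘ₗ r' := by
          intro ht
          have hjk3 : j + 3 ≤ k := by omega
          haveI := σ.projective (i + j + 3)
          have h1 : (f j ∘ₗ r) ∘ₗ σ.f (i + j + 2) =
              (gj ∘ₗ σ.f (i + j + 1)) ∘ₗ σ.f (i + j + 2) := by rw [hr]
          have hz : f j ∘ₗ r ∘ₗ σ.f (i + j + 2) = 0 :=
            calc f j ∘ₗ r ∘ₗ σ.f (i + j + 2)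
                = (f j ∘ₗ r) ∘ₗ σ.f (i + j + 2) := by rw [LinearMap.comp_assoc]
              _ = gj ∘ₗ (σ.f (i + j + 1) ∘ₗ σ.f (i + j + 2)) := by
                  rw [h1, LinearMap.comp_assoc]
              _ = 0 := by rw [hff, LinearMap.comp_zero]
          obtain ⟨s, hs⟩ := lift_of_exact' (f (j + 1)) (f j) (hex j hjk3)
            (r ∘ₗ σ.f (i + j + 2)) hz
          exact ⟨s, hs.symm⟩
        obtain ⟨h', u', hfe, hu'⟩ := IH (j + 1) (by omega) r hrec
        have hterm : f j ∘ₗ (f (j + 1) ∘ₗ u') = 0 := by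
          by_cases h3 : j + 3 ≤ k
          · have hcz : f j ∘ₗ f (j + 1) = 0 :=
              LinearMap.ext fun x => (hex j h3).apply_apply_eq_zero x
            rw [← LinearMap.comp_assoc, hcz, LinearMap.zero_comp]
          · rw [hu' (by omega), LinearMap.comp_zero, LinearMap.comp_zero]
        have hcomp : (gj - (f j ∘ₗ h' : σ.P (i + j + 1) →ₗ[A] C j)) ∘ₗ σ.f (i + j + 1) = 0 := by
          rw [LinearMap.sub_comp, hr, hfe, LinearMap.comp_add, hterm, add_zero,
            sub_eq_zero]
          exact (LinearMap.comp_assoc _ _ _).symm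
        obtain ⟨h, hh⟩ := hC j (by omega) (i + j) (by omega) hn _ hcomp
        refine ⟨h, h', ?_, fun hcontra => absurd hcontra (by omega)⟩
        exact sub_eq_iff_eq_add.mp hh
      · have hsub : n < i + j + 1 := by omega
        have hgj0 : gj = 0 := hmapzero _ hsub _ gj
        exact ⟨0, 0, by simp [hgj0], fun _ => rfl⟩
  haveI := σ.projective (i + 1)
  obtain ⟨g0, hg0⟩ := Module.projective_lifting_property ε g hsurj
  have hinv0 : 1 ≤ k - 1 → ∃ r : σ.P (i + 0 + 2) →ₗ[A] C (0 + 1),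
      g0 ∘ₗ σ.f (i + 0 + 1) = f 0 ∘ₗ r := by
    intro ht
    have h2k : 2 ≤ k := by omega
    haveI := σ.projective (i + 2)
    have hz : ε ∘ₗ g0 ∘ₗ σ.f (i + 1) = 0 :=
      calc ε ∘ₗ g0 ∘ₗ σ.f (i + 1) = (ε ∘ₗ g0) ∘ₗ σ.f (i + 1) := by
            rw [← LinearMap.comp_assoc]
        _ = g ∘ₗ σ.f (i + 1) := by rw [hg0]
        _ = 0 := hg
    obtain ⟨s, hs⟩ := lift_of_exact' (f 0) ε (hex0 h2k) (g0 ∘ₗ σ.f (i + 1)) hz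
    exact ⟨s, hs.symm⟩
  obtain ⟨h, u, hfe, hu⟩ := key (k - 1) 0 (by omega) g0 hinv0
  refine ⟨ε ∘ₗ h, ?_⟩
  have hεf0 : ε ∘ₗ (f 0 ∘ₗ u) = 0 := by
    by_cases h2 : 2 ≤ k
    · have hcz : ε ∘ₗ f 0 = 0 :=
        LinearMap.ext fun x => (hex0 h2).apply_apply_eq_zero x
      rw [← LinearMap.comp_assoc, hcz, LinearMap.zero_comp]
    · rw [hu (by omega), LinearMap.comp_zero, LinearMap.comp_zero]
  calc g = ε ∘ₗ g0 := hg0.symm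
    _ = ε ∘ₗ (h ∘ₗ σ.f (i + 0) + f 0 ∘ₗ u) := by rw [← hfe]
    _ = (ε ∘ₗ h) ∘ₗ σ.f i := by
        ext x
        have := LinearMap.ext_iff.mp hεf0 x
        simp only [LinearMap.comp_apply, LinearMap.add_apply, LinearMap.zero_apply,
          map_add] at this ⊢
        rw [this, add_zero]
        rfl
end

section
/- The class D_{σ_T} is closed under extensions: if 0 → L → M → N → 0 is a short exact sequence with L and N in D_{σ_T}, then M is in D_{σ_T}. -/
open CategoryTheory

variable {A : Type} [Ring A] {n : ℕ} {T : Type} [AddCommGroup T] [Module A T]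

open LinearMap

section

variable {R : Type*} [Ring R]
  {P₂ P₁ P₀ L M N : Type*} [AddCommGroup P₂] [Module R P₂] [AddCommGroup P₁] [Module R P₁]
  [AddCommGroup P₀] [Module R P₀] [AddCommGroup L] [Module R L] [AddCommGroup M] [Module R M]
  [AddCommGroup N] [Module R N]

theorem LinearMap.exists_comp_eq_of_range_le {α : L →ₗ[R] M} (hα : Function.Injective α)
    {d : P₁ →ₗ[R] M} (hd : range d ≤ range α) : ∃ g : P₁ →ₗ[R] L, α ∘ₗ g = d :=
  ⟨(LinearEquiv.ofInjective α hα).symm.toLinearMap ∘ₗ d.codRestrict _ fun x => hd ⟨x, rfl⟩,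
    by ext x; simp [LinearEquiv.ofInjective_symm_apply]⟩

def HomExact (d₂ : P₂ →ₗ[R] P₁) (d₁ : P₁ →ₗ[R] P₀) (M : Type*) [AddCommGroup M] [Module R M] :
    Prop :=
  ∀ g : P₁ →ₗ[R] M, g ∘ₗ d₂ = 0 → ∃ h : P₀ →ₗ[R] M, g = h ∘ₗ d₁

/-- Given `g : P₁ → M` killing `d₂`, its image in `N` factors through `d₁`, and by projectivity
of `P₀` that factorization lifts to `h₁ : P₀ → M`. The difference `g - h₁ ∘ d₁` then lands in `L`
and still kills `d₂`, so it factors through `d₁` as well. -/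
theorem HomExact.of_extension [Module.Projective R P₀] {d₂ : P₂ →ₗ[R] P₁} {d₁ : P₁ →ₗ[R] P₀}
    (hd : d₁ ∘ₗ d₂ = 0) {α : L →ₗ[R] M} {β : M →ₗ[R] N} (hinj : Function.Injective α)
    (hsurj : Function.Surjective β) (hex : Function.Exact α β)
    (hL : HomExact d₂ d₁ L) (hN : HomExact d₂ d₁ N) : HomExact d₂ d₁ M := by
  intro g hg
  obtain ⟨hN', hhN'⟩ := hN (β ∘ₗ g) (by rw [comp_assoc, hg, comp_zero])
  obtain ⟨h₁, hh₁⟩ := Module.projective_lifting_property β hN' hsurj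
  have hβ : β ∘ₗ (g - h₁ ∘ₗ d₁) = 0 := by rw [comp_sub, hhN', ← comp_assoc, hh₁, sub_self]
  have hrange : range (g - h₁ ∘ₗ d₁) ≤ range α := by
    rintro _ ⟨x, rfl⟩
    exact (hex _).mp (LinearMap.congr_fun hβ x)
  obtain ⟨g', hg'⟩ := exists_comp_eq_of_range_le hinj hrange
  have hg'd₂ : g' ∘ₗ d₂ = 0 := by
    rw [← cancel_left hinj, ← comp_assoc, hg', sub_comp, hg, comp_assoc, hd, comp_zero, sub_zero,
      comp_zero]
  obtain ⟨h₂, hh₂⟩ := hL g' hg'd₂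
  exact ⟨h₁ + α ∘ₗ h₂, by rw [add_comp, comp_assoc, ← hh₂, hg', add_sub_cancel]⟩

end

/-- `𝒟_{σ_T}` is closed under extensions. -/
theorem stmt_2 (A : Type) [Ring A] (n : ℕ) (T : Type) [AddCommGroup T] [Module A T]
    (σ : ProjPres A n T) (L M N : ModuleCat.{0} A)
    (α : L →ₗ[A] M) (β : M →ₗ[A] N)
    (hinj : Function.Injective α) (hsurj : Function.Surjective β)
    (hex : Function.Exact α β)
    (hL : σ.MemD L) (hN : σ.MemD N) :
    σ.MemD M := by
  intro i hi hin
  have := σ.projective i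
  exact HomExact.of_extension (σ.exact i hin).linearMap_comp_eq_zero hinj hsurj hex
    (hL i hi hin) (hN i hi hin)
end

section
/- The class D_{σ_T} is closed under cokernels of monomorphisms: if 0 → L → M → N → 0 is exact with L and M in D_{σ_T}, then N is in D_{σ_T}. -/
open CategoryTheory

variable {A : Type} [Ring A] {n : ℕ} {T : Type} [AddCommGroup T] [Module A T]

/-- `𝒟_{σ_T}` is closed under cokernels of monomorphisms. -/
theorem stmt_3 (A : Type) [Ring A] (n : ℕ) (T : Type) [AddCommGroup T] [Module A T]
    (σ : ProjPres A n T) (L M N : ModuleCat.{0} A)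
    (α : L →ₗ[A] M) (β : M →ₗ[A] N)
    (hinj : Function.Injective α) (hsurj : Function.Surjective β)
    (hex : Function.Exact α β)
    (hL : σ.MemD L) (hM : σ.MemD M) :
    σ.MemD N := by
  intro i _ hi g hg
  haveI : Module.Projective A (σ.P (i + 1)) := σ.projective _
  obtain ⟨g', hg'⟩ := Module.projective_lifting_property β g hsurj
  have key : ∃ v : σ.P (i + 1) →ₗ[A] L,
      ∀ x, α (v (σ.f (i + 1) x)) = g' (σ.f (i + 1) x) := by
    have hmem : ∀ x : σ.P (i + 2), g' (σ.f (i + 1) x) ∈ Set.range α := by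
      intro x
      refine (hex _).mp ?_
      have h1 : β (g' (σ.f (i + 1) x)) = g (σ.f (i + 1) x) := by
        rw [← hg']; rfl
      rw [h1]
      have := congrArg (fun φ : _ →ₗ[A] N => φ x) hg
      simpa using this
    let e := LinearEquiv.ofInjective α hinj
    let u : σ.P (i + 2) →ₗ[A] L :=
      e.symm ∘ₗ LinearMap.codRestrict (LinearMap.range α) (g' ∘ₗ σ.f (i + 1))
        (fun x => by simpa [LinearMap.mem_range] using hmem x)
    have hau : ∀ x, α (u x) = g' (σ.f (i + 1) x) := by
      intro x
      have h3 : ∀ l : L, (e l : M) = α l := fun l => rfl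
      have h4 : ∀ y : LinearMap.range α, α (e.symm y) = (y : M) := by
        intro y
        conv_rhs => rw [← e.apply_symm_apply y]
        exact (h3 _).symm
      exact h4 _
    by_cases hi1 : i + 1 < n
    · have hcomp : u ∘ₗ σ.f (i + 2) = 0 := by
        apply LinearMap.ext; intro x
        apply hinj
        simp only [LinearMap.comp_apply, LinearMap.zero_apply, map_zero]
        rw [hau]
        have h4 : σ.f (i + 1) (σ.f (i + 2) x) = 0 :=
          (σ.exact (i + 1) hi1 _).mpr ⟨x, rfl⟩
        rw [h4, map_zero]
      obtain ⟨v, hv⟩ := hL (i + 1) (by omega) hi1 u hcomp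
      refine ⟨v, fun x => ?_⟩
      have h5 : u x = v (σ.f (i + 1) x) := congrArg (fun φ : _ →ₗ[A] L => φ x) hv
      rw [← h5, hau]
    · have hsub : Subsingleton (σ.P (i + 2)) := σ.triv _ (by omega)
      refine ⟨0, fun x => ?_⟩
      have hx0 : x = 0 := Subsingleton.elim _ _
      simp [hx0]
  obtain ⟨v, hv⟩ := key
  have h0 : (g' - α ∘ₗ v) ∘ₗ σ.f (i + 1) = 0 := by
    apply LinearMap.ext; intro x
    simp only [LinearMap.comp_apply, LinearMap.sub_apply, LinearMap.zero_apply]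
    rw [hv x, sub_self]
  obtain ⟨h, hh⟩ := hM i (by omega) hi (g' - α ∘ₗ v) h0
  refine ⟨β ∘ₗ h, ?_⟩
  apply LinearMap.ext; intro x
  have h1 : g x = β (g' x) := by rw [← hg']; rfl
  have h2 := congrArg (fun φ : _ →ₗ[A] M => φ x) hh
  simp only [LinearMap.sub_apply, LinearMap.comp_apply] at h2
  have hba : β (α (v x)) = 0 := (hex _).mpr ⟨v x, rfl⟩
  simp only [LinearMap.comp_apply]
  rw [h1, ← h2, map_sub, hba, sub_zero]
end

section
/- The class D_{σ_T} is closed under kernels of Hom_A(T,-)-epic epimorphisms: if 0 → L → M → N → 0 is an exact sequence which remains exact after applying Hom_A(T,-), and M, N are in D_{σ_T}, then L is in D_{σ_T}. -/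
open CategoryTheory

variable {A : Type} [Ring A] {n : ℕ} {T : Type} [AddCommGroup T] [Module A T]

lemma factorThruInj {A : Type} [Ring A] {L M N P : Type} [AddCommGroup L] [Module A L]
    [AddCommGroup M] [Module A M] [AddCommGroup N] [Module A N] [AddCommGroup P] [Module A P]
    (α : L →ₗ[A] M) (β : M →ₗ[A] N) (hinj : Function.Injective α)
    (hex : Function.Exact α β) (φ : P →ₗ[A] M) (hφ : ∀ x, β (φ x) = 0) :
    ∃ ψ : P →ₗ[A] L, α ∘ₗ ψ = φ := by
  have hmem : ∀ x, φ x ∈ LinearMap.range α := by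
    intro x
    rw [LinearMap.mem_range]
    obtain ⟨y, hy⟩ := (hex (φ x)).mp (hφ x)
    exact ⟨y, hy⟩
  refine ⟨(LinearEquiv.ofInjective α hinj).symm.toLinearMap ∘ₗ
    φ.codRestrict (LinearMap.range α) hmem, ?_⟩
  ext x
  have h1 := (LinearEquiv.ofInjective α hinj).apply_symm_apply ⟨φ x, hmem x⟩
  have h2 := congrArg Subtype.val h1
  simpa [LinearMap.codRestrict, LinearEquiv.ofInjective_apply] using h2

/-- `𝒟_{σ_T}` is closed under kernels of `Hom(T,-)`-epic epimorphisms. -/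
theorem stmt_4 (A : Type) [Ring A] (n : ℕ) (T : Type) [AddCommGroup T] [Module A T]
    (σ : ProjPres A n T) (L M N : ModuleCat.{0} A)
    (α : L →ₗ[A] M) (β : M →ₗ[A] N)
    (hinj : Function.Injective α) (hsurj : Function.Surjective β)
    (hex : Function.Exact α β)
    (hTepic : ∀ u : T →ₗ[A] N, ∃ v : T →ₗ[A] M, u = β ∘ₗ v)
    (hM : σ.MemD M) (hN : σ.MemD N) :
    σ.MemD L := by
  intro i _ hin g hg
  obtain ⟨h, hh⟩ := hM i (by omega) hin (α ∘ₗ g)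
    (by rw [LinearMap.comp_assoc, hg, LinearMap.comp_zero])
  have hβα : ∀ x, β (α x) = 0 := fun x => hex.apply_apply_eq_zero x
  match i with
  | 0 =>
    -- β ∘ h kills ker ε
    have hker : LinearMap.ker σ.ε ≤ LinearMap.ker (β ∘ₗ h) := by
      rw [σ.exact0.linearMap_ker_eq]
      rintro _ ⟨y, rfl⟩
      have : h (σ.f 0 y) = α (g y) := by
        have := congrFun (congrArg DFunLike.coe hh) y
        simpa using this.symm
      simp [this, hβα]
    let e := σ.ε.quotKerEquivOfSurjective σ.surj
    let u : T →ₗ[A] N := (Submodule.liftQ _ (β ∘ₗ h) hker) ∘ₗ e.symm.toLinearMap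
    have hu : ∀ x, u (σ.ε x) = β (h x) := by
      intro x
      have he : e.symm (σ.ε x) = Submodule.Quotient.mk x := by
        rw [LinearEquiv.symm_apply_eq]; rfl
      simp [u, he]
    obtain ⟨v, hv⟩ := hTepic u
    obtain ⟨h₀, hh₀⟩ := factorThruInj α β hinj hex (h - v ∘ₗ σ.ε) (by
      intro x
      have : β (v (σ.ε x)) = u (σ.ε x) := by
        rw [hv]; rfl
      simp [this, hu])
    refine ⟨h₀, ?_⟩
    ext x
    apply hinj
    have h1 := congrFun (congrArg DFunLike.coe hh₀) (σ.f 0 x)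
    have h2 := congrFun (congrArg DFunLike.coe hh) x
    have h3 : σ.ε (σ.f 0 x) = 0 := σ.exact0.apply_apply_eq_zero x
    simp only [LinearMap.comp_apply, LinearMap.sub_apply] at h1 h2 ⊢
    rw [h1, ← h2, h3]
    simp
  | j + 1 =>
    obtain ⟨h', hh'⟩ := hN j (by omega) (by omega) (β ∘ₗ h) (by
      rw [LinearMap.comp_assoc, ← hh, ← LinearMap.comp_assoc, hex.linearMap_comp_eq_zero,
        LinearMap.zero_comp])
    haveI := σ.projective j
    obtain ⟨v, hv⟩ := Module.projective_lifting_property β h' hsurj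
    obtain ⟨h₀, hh₀⟩ := factorThruInj α β hinj hex (h - v ∘ₗ σ.f j) (by
      intro x
      have h2 := congrFun (congrArg DFunLike.coe hh') x
      have h3 := congrFun (congrArg DFunLike.coe hv) (σ.f j x)
      simp only [LinearMap.comp_apply] at h2 h3
      simp [h2, h3])
    refine ⟨h₀, ?_⟩
    ext x
    apply hinj
    have h1 := congrFun (congrArg DFunLike.coe hh₀) (σ.f (j + 1) x)
    have h2 := congrFun (congrArg DFunLike.coe hh) x
    have h3 : σ.f j (σ.f (j + 1) x) = 0 := (σ.exact j (by omega)).apply_apply_eq_zero x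
    simp only [LinearMap.comp_apply, LinearMap.sub_apply] at h1 h2 ⊢
    rw [h1, ← h2, h3]
    simp
end

section
/- The class D_{σ_A} is closed under kernels of Hom_A(T,-)-epic morphisms: if 0 → L → M → N is exact with M, N in D_{σ_A} and Hom_A(T,M) → Hom_A(T,N) surjective, then L is in D_{σ_A}. -/
open CategoryTheory

variable {A : Type} [Ring A] {n : ℕ} {T : Type} [AddCommGroup T] [Module A T]

section Aux

variable {A : Type} [Ring A] {T : Type} [AddCommGroup T] [Module A T]
variable {L' M' N' : Type} [AddCommGroup L'] [AddCommGroup M'] [AddCommGroup N']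
  [Module A L'] [Module A M'] [Module A N']

/-- Lifting maps from `add T` objects through a `Hom(T,-)`-epic map. -/
lemma lift_add (β : M' →ₗ[A] N')
    (hTepic : ∀ u : T →ₗ[A] N', ∃ v : T →ₗ[A] M', u = β ∘ₗ v)
    {X : Type} [AddCommGroup X] [Module A X] (hX : InAdd A T X)
    (u : X →ₗ[A] N') : ∃ v : X →ₗ[A] M', u = β ∘ₗ v := by
  obtain ⟨m, ι, π, hπι⟩ := hX
  choose v hv using fun j : Fin m =>
    hTepic ((u ∘ₗ π) ∘ₗ LinearMap.single A (fun _ : Fin m => T) j)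
  refine ⟨(∑ j : Fin m, v j ∘ₗ LinearMap.proj j) ∘ₗ ι, ?_⟩
  have hβV : β ∘ₗ (∑ j : Fin m, v j ∘ₗ LinearMap.proj j) = u ∘ₗ π := by
    apply LinearMap.ext
    intro x
    have step1 : β ((∑ j : Fin m, v j ∘ₗ LinearMap.proj j) x)
        = ∑ j : Fin m, β (v j (x j)) := by
      simp [LinearMap.sum_apply, map_sum]
    rw [LinearMap.comp_apply, step1]
    have h2 : ∀ j : Fin m, β (v j (x j)) = u (π (Pi.single j (x j))) := by
      intro j
      have := congrArg (fun f : T →ₗ[A] N' => f (x j)) (hv j)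
      simpa [LinearMap.comp_apply, LinearMap.single_apply] using this.symm
    simp_rw [h2]
    rw [← map_sum, ← map_sum, LinearMap.comp_apply]
    exact congrArg u (congrArg π (Finset.univ_sum_single x))
  calc u = (u ∘ₗ π) ∘ₗ ι := by rw [LinearMap.comp_assoc, hπι, LinearMap.comp_id]
    _ = (β ∘ₗ (∑ j : Fin m, v j ∘ₗ LinearMap.proj j)) ∘ₗ ι := by rw [hβV]
    _ = β ∘ₗ (∑ j : Fin m, v j ∘ₗ LinearMap.proj j) ∘ₗ ι := by
        rw [LinearMap.comp_assoc]

/-- Factoring through the kernel. -/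
lemma ker_factor (α : L' →ₗ[A] M') (β : M' →ₗ[A] N')
    (hinj : Function.Injective α) (hex : Function.Exact α β)
    {X : Type} [AddCommGroup X] [Module A X]
    (w : X →ₗ[A] M') (hw : β ∘ₗ w = 0) : ∃ k : X →ₗ[A] L', α ∘ₗ k = w := by
  have hmem : ∀ x : X, w x ∈ LinearMap.range α := by
    intro x
    have : β (w x) = 0 := congrArg (fun f : X →ₗ[A] N' => f x) hw
    exact LinearMap.mem_range.mpr ((hex (w x)).mp this)
  let e := LinearEquiv.ofInjective α hinj
  refine ⟨e.symm.toLinearMap ∘ₗ LinearMap.codRestrict (LinearMap.range α) w hmem, ?_⟩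
  ext x
  have h2 : ∀ y : LinearMap.range α, α (e.symm y) = (y : M') := by
    intro y
    conv_rhs => rw [← e.apply_symm_apply y]
    rfl
  simp only [LinearMap.comp_apply, LinearEquiv.coe_coe]
  rw [h2]
  rfl

/-- The key diagram chase. -/
lemma key_chase (α : L' →ₗ[A] M') (β : M' →ₗ[A] N')
    (hinj : Function.Injective α) (hex : Function.Exact α β)
    (hTepic : ∀ u : T →ₗ[A] N', ∃ v : T →ₗ[A] M', u = β ∘ₗ v)
    {Qb Qc Qd : Type} [AddCommGroup Qb] [AddCommGroup Qc] [AddCommGroup Qd]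
    [Module A Qb] [Module A Qc] [Module A Qd]
    (b : Qb →ₗ[A] Qc) (c : Qc →ₗ[A] Qd)
    (hcb : c ∘ₗ b = 0) (hQd : InAdd A T Qd)
    (hNlift : ∀ g : Qc →ₗ[A] N', g ∘ₗ b = 0 → ∃ h'' : Qd →ₗ[A] N', g = h'' ∘ₗ c)
    (h : Qb →ₗ[A] L') (h' : Qc →ₗ[A] M') (hh' : α ∘ₗ h = h' ∘ₗ b) :
    ∃ ℓ : Qc →ₗ[A] L', h = ℓ ∘ₗ b := by
  have hβα : β ∘ₗ α = 0 := LinearMap.ext fun x => hex.apply_apply_eq_zero x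
  have h1 : (β ∘ₗ h') ∘ₗ b = 0 := by
    rw [LinearMap.comp_assoc, ← hh', ← LinearMap.comp_assoc, hβα, LinearMap.zero_comp]
  obtain ⟨h'', hh''⟩ := hNlift (β ∘ₗ h') h1
  obtain ⟨k, hk⟩ := lift_add β hTepic hQd h''
  have hw : β ∘ₗ (h' - k ∘ₗ c) = 0 := by
    rw [LinearMap.comp_sub, hh'', hk, LinearMap.comp_assoc, sub_self]
  obtain ⟨ℓ, hℓ⟩ := ker_factor α β hinj hex (h' - k ∘ₗ c) hw
  have hstep : α ∘ₗ (ℓ ∘ₗ b) = (h' - k ∘ₗ c) ∘ₗ b := by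
    rw [← LinearMap.comp_assoc, hℓ]
  have h2 : (h' - k ∘ₗ c) ∘ₗ b = h' ∘ₗ b := by
    rw [LinearMap.sub_comp, LinearMap.comp_assoc, hcb, LinearMap.comp_zero, sub_zero]
  have h3 : α ∘ₗ (ℓ ∘ₗ b) = α ∘ₗ h := by rw [hstep, h2, hh']
  exact ⟨ℓ, LinearMap.ext fun x => hinj
    (congrArg (fun f : Qb →ₗ[A] M' => f x) h3).symm⟩

/-- A subsingleton module is in `add T`. -/
lemma inAdd_of_subsingleton {X : Type} [AddCommGroup X] [Module A X]
    [Subsingleton X] : InAdd A T X :=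
  ⟨0, 0, 0, LinearMap.ext fun x => Subsingleton.elim _ _⟩

/-- If the next term is trivial, any map vanishing on the image is zero. -/
lemma eq_zero_of_exact_subsingleton {X Y Z : Type}
    [AddCommGroup X] [AddCommGroup Y] [AddCommGroup Z]
    [Module A X] [Module A Y] [Module A Z]
    (f : X →ₗ[A] Y) (g : Y →ₗ[A] Z) (hex : Function.Exact f g)
    [Subsingleton Z] (h : Y →ₗ[A] N') (hh : h ∘ₗ f = 0) : h = 0 := by
  ext y
  have : g y = 0 := Subsingleton.elim _ _
  obtain ⟨x, hx⟩ := (hex y).mp this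
  have := congrArg (fun f' : X →ₗ[A] N' => f' x) hh
  simpa [← hx] using this

end Aux

/-- `𝒟_{σ_A}` is closed under kernels of `Hom(T,-)`-epic morphisms. -/
theorem stmt_5 (A : Type) [Ring A] (n : ℕ) (T : Type) [AddCommGroup T] [Module A T]
    (σ : AddPres A n T) (L M N : ModuleCat.{0} A)
    (α : L →ₗ[A] M) (β : M →ₗ[A] N)
    (hinj : Function.Injective α)
    (hex : Function.Exact α β)
    (hTepic : ∀ u : T →ₗ[A] N, ∃ v : T →ₗ[A] M, u = β ∘ₗ v)
    (hM : σ.MemDA M) (hN : σ.MemDA N) :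
    σ.MemDA L := by
  obtain ⟨hM1, hM2, hM3⟩ := hM
  obtain ⟨hN1, hN2, hN3⟩ := hN
  refine ⟨?_, ?_, ?_⟩
  · -- condition 1
    intro u
    obtain ⟨h', hh'⟩ := hM1 (α ∘ₗ u)
    have hcb : σ.g 0 ∘ₗ σ.g0 = 0 :=
      LinearMap.ext fun x => σ.exact0.apply_apply_eq_zero x
    by_cases hn : 1 ≤ n
    · have hQd : InAdd A T (σ.Q 1) := σ.inAdd 1 hn
      exact key_chase α β hinj hex hTepic σ.g0 (σ.g 0) hcb hQd
        (fun g hg => hN2 (by omega) g hg) u h' hh'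
    · have : Subsingleton (σ.Q 1) := σ.triv 1 (by omega)
      have hQd : InAdd A T (σ.Q 1) := inAdd_of_subsingleton
      refine key_chase α β hinj hex hTepic σ.g0 (σ.g 0) hcb hQd ?_ u h' hh'
      intro g hg
      exact ⟨0, by rw [eq_zero_of_exact_subsingleton σ.g0 (σ.g 0) σ.exact0 g hg,
        LinearMap.zero_comp]⟩
  · -- condition 2
    intro hk h hh0
    obtain ⟨h', hh'⟩ := hM2 hk (α ∘ₗ h)
      (by rw [LinearMap.comp_assoc, hh0, LinearMap.comp_zero])
    have hn1 : 1 ≤ n := by omega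
    have hcb : σ.g 1 ∘ₗ σ.g 0 = 0 :=
      LinearMap.ext fun x => (σ.exact 0 hn1).apply_apply_eq_zero x
    by_cases hn : 2 ≤ n
    · have hQd : InAdd A T (σ.Q 2) := σ.inAdd 2 hn
      exact key_chase α β hinj hex hTepic (σ.g 0) (σ.g 1) hcb hQd
        (fun g hg => hN3 0 (by omega) g hg) h h' hh'
    · have : Subsingleton (σ.Q 2) := σ.triv 2 (by omega)
      have hQd : InAdd A T (σ.Q 2) := inAdd_of_subsingleton
      refine key_chase α β hinj hex hTepic (σ.g 0) (σ.g 1) hcb hQd ?_ h h' hh'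
      intro g hg
      exact ⟨0, by rw [eq_zero_of_exact_subsingleton (σ.g 0) (σ.g 1)
        (σ.exact 0 hn1) g hg, LinearMap.zero_comp]⟩
  · -- condition 3
    intro i hi h hh0
    obtain ⟨h', hh'⟩ := hM3 i hi (α ∘ₗ h)
      (by rw [LinearMap.comp_assoc, hh0, LinearMap.comp_zero])
    have hn1 : i + 1 < n := by omega
    have hcb : σ.g (i + 2) ∘ₗ σ.g (i + 1) = 0 :=
      LinearMap.ext fun x => (σ.exact (i + 1) hn1).apply_apply_eq_zero x
    by_cases hn : i + 3 ≤ n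
    · have hQd : InAdd A T (σ.Q (i + 3)) := σ.inAdd (i + 3) hn
      exact key_chase α β hinj hex hTepic (σ.g (i + 1)) (σ.g (i + 2)) hcb hQd
        (fun g hg => hN3 (i + 1) (by omega) g hg) h h' hh'
    · have : Subsingleton (σ.Q (i + 3)) := σ.triv (i + 3) (by omega)
      have hQd : InAdd A T (σ.Q (i + 3)) := inAdd_of_subsingleton
      refine key_chase α β hinj hex hTepic (σ.g (i + 1)) (σ.g (i + 2)) hcb hQd
        ?_ h h' hh'
      intro g hg
      exact ⟨0, by rw [eq_zero_of_exact_subsingleton (σ.g (i + 1)) (σ.g (i + 2))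
        (σ.exact (i + 1) hn1) g hg, LinearMap.zero_comp]⟩
end
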